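/- arXiv:2507.18749 — 2 statements merged into one kernel-verified Lean document; each statement's English description precedes it below -/
import Mathlib

section
/- Let q ∈ (0,1), let J ~ Bernoulli(q) and N ~ Poisson(q). Then J precedes N in the convex order: for every convex function φ : ℝ → ℝ, E[φ(J)] ≤ E[φ(N)]. -/
/-!
A convex `φ` lies above the line through `(0, φ 0)` and `(1, φ 1)` at every `k ≥ 1`, since `1`
lies between `0` and `k`. Averaging this bound against any distribution on `ℕ` with mean `m` gives
`E[φ(N)] ≥ φ 0 + m (φ 1 - φ 0) = E[φ(J)]` for `J ~ Bernoulli(m)`; a Poisson(q) variable has mean `q`.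
-/

open Real NNReal ProbabilityTheory

theorem ConvexOn.add_mul_sub_le_of_one_le {φ : ℝ → ℝ} (hφ : ConvexOn ℝ Set.univ φ) (a b : ℝ)
    {t : ℝ} (ht : 1 ≤ t) : φ a + t * (φ b - φ a) ≤ φ (a + t * (b - a)) := by
  have ht0 : 0 < t := by linarith
  have hb := hφ.2 (Set.mem_univ a) (Set.mem_univ (a + t * (b - a)))
    (sub_nonneg.2 ((inv_le_one₀ ht0).2 ht)) (inv_nonneg.2 ht0.le) (sub_add_cancel 1 t⁻¹)
  have hcomb : (1 - t⁻¹) • a + t⁻¹ • (a + t * (b - a)) = b := by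
    simp only [smul_eq_mul]
    field_simp
    ring
  rw [hcomb, smul_eq_mul, smul_eq_mul] at hb
  have hb' := mul_le_mul_of_nonneg_left hb ht0.le
  field_simp at hb'
  linarith

theorem ConvexOn.bernoulli_le_tsum {φ : ℝ → ℝ} (hφ : ConvexOn ℝ Set.univ φ) {w : ℕ → ℝ} {m : ℝ}
    (hw : ∀ k, 0 ≤ w k) (hw₁ : HasSum w 1) (hm : HasSum (fun k => k * w k) m)
    (hφw : Summable fun k => w k * φ k) :
    (1 - m) * φ 0 + m * φ 1 ≤ ∑' k, w k * φ k := by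
  have hline : ∀ k : ℕ, φ 0 + k * (φ 1 - φ 0) ≤ φ k := by
    rintro (_ | k)
    · simp
    · simpa using hφ.add_mul_sub_le_of_one_le 0 1 (t := (k + 1 : ℕ)) (by simp)
  have hsum : HasSum (fun k : ℕ => w k * (φ 0 + k * (φ 1 - φ 0))) ((1 - m) * φ 0 + m * φ 1) := by
    rw [show (1 - m) * φ 0 + m * φ 1 = 1 * φ 0 + m * (φ 1 - φ 0) by ring]
    exact ((hw₁.mul_right (φ 0)).add (hm.mul_right (φ 1 - φ 0))).congr_fun fun k => by ring
  exact hasSum_le (fun k => mul_le_mul_of_nonneg_left (hline k) (hw k)) hsum hφw.hasSum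

theorem hasSum_mean_poissonMeasure (r : ℝ≥0) :
    HasSum (fun n : ℕ => n * (exp (-r) * r ^ n / n.factorial)) r := by
  rw [← hasSum_nat_add_iff' 1, Finset.sum_range_one, Nat.cast_zero, zero_mul, sub_zero]
  have h := (hasSum_one_poissonMeasure r).mul_left (r : ℝ)
  rw [mul_one] at h
  refine h.congr_fun fun n => ?_
  rw [Nat.factorial_succ]
  push_cast
  field_simp
  ring

/-- Bernoulli(q) precedes Poisson(q) in the convex order. -/
theorem stmt9 (q : ℝ) (hq : q ∈ Set.Ioo (0:ℝ) 1)
    (φ : ℝ → ℝ) (hφ : ConvexOn ℝ Set.univ φ)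
    (hsum : Summable fun k : ℕ => Real.exp (-q) * q ^ k / (Nat.factorial k) * φ k) :
    (1 - q) * φ 0 + q * φ 1 ≤
      ∑' k : ℕ, Real.exp (-q) * q ^ k / (Nat.factorial k) * φ k := by
  lift q to ℝ≥0 using hq.1.le
  exact hφ.bernoulli_le_tsum (fun k => by positivity) (hasSum_one_poissonMeasure q)
    (hasSum_mean_poissonMeasure q) hsum
end

section
/- For q ∈ (0,1) and α ∈ (0,1): |q(α + q − αq) − q e^{−q}( α e^{−q(1−α)} + q(1−α)² e^{−q(1−α)} )| ≤ 1.2 q². -/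
set_option maxHeartbeats 1000000

/-- Cubic lower bound on `exp (-x)` for `0 ≤ x ≤ 1`. -/
lemma exp_neg_cubic_lb {x : ℝ} (h0 : 0 ≤ x) (h1 : x ≤ 1) :
    1 - x + x ^ 2 / 2 - 2 / 9 * x ^ 3 ≤ Real.exp (-x) := by
  have hx : |(-x)| ≤ 1 := by rw [abs_neg, abs_of_nonneg h0]; exact h1
  have h := Real.exp_bound hx (n := 3) (by norm_num)
  have hs : ∑ m ∈ Finset.range 3, (-x) ^ m / (m.factorial : ℝ) = 1 - x + x ^ 2 / 2 := by
    simp [Finset.sum_range_succ]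
    ring
  rw [hs, abs_neg, abs_of_nonneg h0] at h
  have h' := (abs_sub_le_iff.1 h).2
  have hfac : ((3 : ℕ).factorial : ℝ) = 6 := by norm_num [Nat.factorial]
  have hsucc : ((Nat.succ 3 : ℕ) : ℝ) = 4 := by norm_num
  rw [hfac, hsucc] at h'
  norm_num at h' ⊢
  linarith

/-- Tangent-line lower bound on `exp (-x)` at `x = 1`. -/
lemma exp_neg_tangent_lb (x : ℝ) : 0.3678 * (2 - x) ≤ Real.exp (-x) := by
  have h1 : Real.exp (-x) = Real.exp (-1) * Real.exp (1 - x) := by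
    rw [← Real.exp_add]; ring_nf
  have h2 : (1 - x) + 1 ≤ Real.exp (1 - x) := Real.add_one_le_exp _
  have h3 : (0.3678 : ℝ) ≤ Real.exp (-1) := by
    rw [Real.exp_neg]
    have hp : (0 : ℝ) < Real.exp 1 := Real.exp_pos 1
    have hc := mul_inv_cancel₀ (ne_of_gt hp)
    nlinarith [Real.exp_one_lt_d9, inv_pos.2 hp]
  have h4 : (0 : ℝ) < Real.exp (-1) := Real.exp_pos _
  rcases le_or_gt (2 - x) 0 with h | h
  · nlinarith [Real.exp_pos (-x)]
  · nlinarith [Real.exp_pos (1 - x)]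

/-- Polynomial inequality for the small-`x` case. -/
lemma poly_case1 (q α : ℝ) (hq0 : 0 < q) (hq1 : q < 1) (ha0 : 0 < α) (ha1 : α < 1)
    (hx1 : q * (2 - α) ≤ 1) :
    (α + q * (1 - α) ^ 2) * (2 - α) * (1 - 2 / 9 * (q * (2 - α))) + α * (1 - α) ≤ 1.2 := by
  have key2 : q * (2 - α) * ((1 - α) ^ 2 - 2 / 9 * α * (2 - α)) ≤ 2 * (α - 3/4) ^ 2 + 0.075 := by
    rcases le_or_gt ((1 - α) ^ 2 - 2 / 9 * α * (2 - α)) 0 with h | h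
    · nlinarith [mul_nonneg (mul_nonneg hq0.le (by linarith : (0:ℝ) ≤ 2 - α)) (neg_nonneg.2 h),
        sq_nonneg (α - 3/4)]
    · nlinarith [mul_nonneg (sub_nonneg.2 hx1) h.le, sq_nonneg (α - 5/14)]
  nlinarith [key2, sq_nonneg (q * (1 - α) * (2 - α)), sq_nonneg (α - 3/4)]

/-- Polynomial inequality for the large-`x` case. -/
lemma poly_case2 (q α : ℝ) (hq0 : 0 < q) (hq1 : q < 1) (ha0 : 0 < α) (ha1 : α < 1)
    (hx1 : 1 < q * (2 - α)) :
    (α + q * (1 - α) ^ 2) * (1 - 0.3678 * (2 - q * (2 - α))) + q * α * (1 - α) ≤ 1.2 * q := by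
  nlinarith [sq_nonneg (1 - α), sq_nonneg (q - α), mul_pos hq0 ha0,
    sq_nonneg (q * (1 - α)), sq_nonneg (q - 1), sq_nonneg α,
    mul_nonneg (mul_nonneg hq0.le ha0.le) (sub_nonneg.2 ha1.le),
    mul_nonneg (sub_nonneg.2 hx1.le) ha0.le,
    mul_nonneg (sub_nonneg.2 hx1.le) (sub_nonneg.2 ha1.le),
    mul_nonneg (sub_nonneg.2 hx1.le) (sub_nonneg.2 hq1.le)]

/-- Bound on φ̆_v(1) in the Poisson approximation proof. -/
theorem stmt11 (q α : ℝ) (hq : q ∈ Set.Ioo (0:ℝ) 1) (hα : α ∈ Set.Ioo (0:ℝ) 1) :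
    |q * (α + q - α * q) -
        q * Real.exp (-q) *
          (α * Real.exp (-(q * (1 - α))) +
            q * (1 - α) ^ 2 * Real.exp (-(q * (1 - α))))| ≤ 1.2 * q ^ 2 := by
  obtain ⟨hq0, hq1⟩ := hq
  obtain ⟨ha0, ha1⟩ := hα
  have hx0 : 0 ≤ q * (2 - α) := by nlinarith
  obtain ⟨E, hEdef⟩ : ∃ E : ℝ, E = Real.exp (-(q * (2 - α))) := ⟨_, rfl⟩
  have hE1 : E ≤ 1 := by rw [hEdef]; exact Real.exp_le_one_iff.2 (by nlinarith)
  have hE0 : 0 < E := hEdef ▸ Real.exp_pos _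
  have hcomb : Real.exp (-q) * Real.exp (-(q * (1 - α))) = E := by
    rw [hEdef, ← Real.exp_add]; congr 1; ring
  have hrw : q * (α + q - α * q) -
        q * Real.exp (-q) *
          (α * Real.exp (-(q * (1 - α))) +
            q * (1 - α) ^ 2 * Real.exp (-(q * (1 - α)))) =
      q * ((α + q * (1 - α) ^ 2) * (1 - E) + q * α * (1 - α)) := by
    have h : q * Real.exp (-q) *
          (α * Real.exp (-(q * (1 - α))) +
            q * (1 - α) ^ 2 * Real.exp (-(q * (1 - α)))) =
        q * (α + q * (1 - α) ^ 2) * (Real.exp (-q) * Real.exp (-(q * (1 - α)))) := by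
      ring
    rw [h, hcomb]; ring
  rw [hrw]
  have h1 : 0 ≤ α + q * (1 - α) ^ 2 := by nlinarith
  have h1E : 0 ≤ 1 - E := by linarith
  have hqa : 0 ≤ q * α * (1 - α) :=
    mul_nonneg (mul_nonneg hq0.le ha0.le) (by linarith)
  have hnn : 0 ≤ (α + q * (1 - α) ^ 2) * (1 - E) + q * α * (1 - α) := by
    have := mul_nonneg h1 h1E
    linarith
  rw [abs_of_nonneg (mul_nonneg hq0.le hnn)]
  have key : (α + q * (1 - α) ^ 2) * (1 - E) + q * α * (1 - α) ≤ 1.2 * q := by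
    rcases le_or_gt (q * (2 - α)) 1 with hx1 | hx1
    · have hlb := exp_neg_cubic_lb hx0 hx1
      rw [← hEdef] at hlb
      have h2 : (1 : ℝ) - E ≤ q * (2 - α) * (1 - 2 / 9 * (q * (2 - α))) := by
        nlinarith [mul_nonneg (sq_nonneg (q * (2 - α))) (sub_nonneg.2 hx1),
          sq_nonneg (q * (2 - α))]
      have h3 : (α + q * (1 - α) ^ 2) * (1 - E) ≤
          (α + q * (1 - α) ^ 2) * (q * (2 - α) * (1 - 2 / 9 * (q * (2 - α)))) :=
        mul_le_mul_of_nonneg_left h2 h1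
      have hG := poly_case1 q α hq0 hq1 ha0 ha1 hx1
      have hmul := mul_le_mul_of_nonneg_left hG hq0.le
      nlinarith [h3, hmul]
    · have hlb := exp_neg_tangent_lb (q * (2 - α))
      rw [← hEdef] at hlb
      have h2 : (1 : ℝ) - E ≤ 1 - 0.3678 * (2 - q * (2 - α)) := by linarith
      have h3 : (α + q * (1 - α) ^ 2) * (1 - E) ≤
          (α + q * (1 - α) ^ 2) * (1 - 0.3678 * (2 - q * (2 - α))) :=
        mul_le_mul_of_nonneg_left h2 h1
      have hG := poly_case2 q α hq0 hq1 ha0 ha1 hx1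
      linarith
  calc q * ((α + q * (1 - α) ^ 2) * (1 - E) + q * α * (1 - α))
      ≤ q * (1.2 * q) := mul_le_mul_of_nonneg_left key hq0.le
    _ = 1.2 * q ^ 2 := by ring
end
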